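/- arXiv:2307.10959 — 2 statements merged into one kernel-verified Lean document; each statement's English description precedes it below -/
import Mathlib

section
/- Let M ⊆ ℝⁿ be a subset with the subspace differential structure F, and v: F → F a derivation. Then for every point p ∈ M there exists a unique maximal integral curve γ: I → M of v with γ(0) = p, where I ⊆ ℝ is an interval containing 0. -/
/-- The initial topology induced by a family of real-valued functions: the smallest
topology making every function in `F` continuous. -/
def initialTopology {X : Type*} (F : Set (X → ℝ)) : TopologicalSpace X :=
  ⨆ f ∈ F, TopologicalSpace.induced f inferInstance

/-- `F` is closed under composition with smooth functions `ℝᵐ → ℝ`. -/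
def ClosedUnderSmoothOps {X : Type*} (F : Set (X → ℝ)) : Prop :=
  ∀ (m : ℕ) (g : (Fin m → ℝ) → ℝ), ContDiff ℝ (⊤ : ℕ∞) g →
    ∀ f : Fin m → (X → ℝ), (∀ i, f i ∈ F) → (fun x => g fun i => f i x) ∈ F

/-- A differential structure (in the sense of Sikorski) on a set `X`: a set of
real-valued functions closed under composition with smooth functions and closed under
locality with respect to its own initial topology. -/
def IsDiffStructure {X : Type*} (F : Set (X → ℝ)) : Prop :=
  ClosedUnderSmoothOps F ∧
    ∀ h : X → ℝ,
      (∀ p : X, ∃ U : Set X, (initialTopology F).IsOpen U ∧ p ∈ U ∧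
          ∃ a ∈ F, ∀ x ∈ U, h x = a x) → h ∈ F

/-- `F` is the differential structure generated by `A`: the smallest differential
structure containing `A`. -/
def IsGeneratedDiffStructure {X : Type*} (A F : Set (X → ℝ)) : Prop :=
  IsDiffStructure F ∧ A ⊆ F ∧
    ∀ G : Set (X → ℝ), IsDiffStructure G → A ⊆ G → F ⊆ G

/-- A map `φ : (Y, G) → (M, F)` of differential spaces is smooth if pullbacks of
structure functions are structure functions. -/
def DSmooth {Y M : Type*} (G : Set (Y → ℝ)) (F : Set (M → ℝ)) (φ : Y → M) : Prop :=
  ∀ f ∈ F, (f ∘ φ) ∈ G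

/-- The pullback of a family of functions along a map (e.g. restriction along an
inclusion of a subset). -/
def pullbackFuncs {Y M : Type*} (j : Y → M) (F : Set (M → ℝ)) : Set (Y → ℝ) :=
  (fun f => f ∘ j) '' F

open scoped BigOperators

/-- A `C^∞`-ring derivation of a differential structure `F` on `X`: a map `v`
preserving `F` and satisfying the chain rule for all smooth `g : ℝᵏ → ℝ`. -/
def IsCInftyDerivation {X : Type*} (F : Set (X → ℝ))
    (v : (X → ℝ) → (X → ℝ)) : Prop :=
  Set.MapsTo v F F ∧
    ∀ (k : ℕ) (g : (Fin k → ℝ) → ℝ), ContDiff ℝ (⊤ : ℕ∞) g →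
      ∀ f : Fin k → (X → ℝ), (∀ i, f i ∈ F) →
        v (fun x => g fun i => f i x) =
          fun x => ∑ j, fderiv ℝ g (fun i => f i x) (Pi.single j 1) * v (f j) x

/-- Membership in `C^∞(I)` for a subset `I ⊆ ℝ`: `u` is locally (on `I`) the
restriction of a smooth function on `ℝ`.  This is the subspace differential structure
on `I`. -/
def SmoothOnSubsetR (I : Set ℝ) (u : ℝ → ℝ) : Prop :=
  ∀ t ∈ I, ∃ ε > (0 : ℝ), ∃ g : ℝ → ℝ, ContDiff ℝ (⊤ : ℕ∞) g ∧
    ∀ s ∈ I, |s - t| < ε → u s = g s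

/-- `γ|_I` is an integral curve of the derivation `v` on `(X, F)`: `I` is a connected
subset of `ℝ` containing `0` (possibly a single point), `γ` is smooth as a map of
differential spaces `(I, C^∞(I)) → (X, F)`, and `d/dt (f ∘ γ) = v(f) ∘ γ` on `I` for
all `f ∈ F`. -/
def IsDerivIntegralCurve {X : Type*} (F : Set (X → ℝ)) (v : (X → ℝ) → (X → ℝ))
    (I : Set ℝ) (γ : ℝ → X) : Prop :=
  (0 : ℝ) ∈ I ∧ IsPreconnected I ∧
    ∀ f ∈ F, SmoothOnSubsetR I (fun t => f (γ t)) ∧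
      ∀ t ∈ I, HasDerivWithinAt (fun s => f (γ s)) (v f (γ t)) I t

/-- A maximal integral curve: an integral curve extending every other integral curve
with the same initial point. -/
def IsMaximalDerivIntegralCurve {X : Type*} (F : Set (X → ℝ)) (v : (X → ℝ) → (X → ℝ))
    (I : Set ℝ) (γ : ℝ → X) : Prop :=
  IsDerivIntegralCurve F v I γ ∧
    ∀ (J : Set ℝ) (τ : ℝ → X), IsDerivIntegralCurve F v J τ → τ 0 = γ 0 →
      J ⊆ I ∧ Set.EqOn τ γ J

open Set Filter Topology Metric

namespace MaxCurveAux

variable {n : ℕ} {M : Set (Fin n → ℝ)}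

/-- The set of functions on `M` that are locally restrictions of globally smooth functions. -/
def LocRes (M : Set (Fin n → ℝ)) : Set (↥M → ℝ) :=
  {h | ∀ q : ↥M, ∃ V : Set (Fin n → ℝ), IsOpen V ∧ (q : Fin n → ℝ) ∈ V ∧
      ∃ g : (Fin n → ℝ) → ℝ, ContDiff ℝ (⊤ : ℕ∞) g ∧ ∀ x : ↥M, (x : Fin n → ℝ) ∈ V → h x = g x}

theorem const_mem_locRes (c : ℝ) : (fun _ : ↥M => c) ∈ LocRes M :=
  fun _ => ⟨univ, isOpen_univ, trivial, fun _ => c, contDiff_const, fun _ _ => rfl⟩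

theorem locRes_continuous {h : ↥M → ℝ} (hh : h ∈ LocRes M) : Continuous h := by
  rw [continuous_iff_continuousAt]
  intro q
  obtain ⟨V, hVo, hVq, g, hg, hm⟩ := hh q
  have hVn : (Subtype.val ⁻¹' V : Set ↥M) ∈ 𝓝 q :=
    (hVo.preimage continuous_subtype_val).mem_nhds hVq
  exact ((hg.continuous.comp continuous_subtype_val).continuousAt).congr
    (Filter.eventuallyEq_of_mem hVn (fun x hx => (hm x hx).symm))

theorem locRes_open_isOpen {U : Set ↥M} (hU : (initialTopology (LocRes M)).IsOpen U) :
    IsOpen U := by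
  have hle : (instTopologicalSpaceSubtype : TopologicalSpace ↥M) ≤ initialTopology (LocRes M) := by
    refine le_trans (continuous_iff_le_induced.1 (locRes_continuous (const_mem_locRes 0))) ?_
    exact le_iSup₂ (f := fun (f : ↥M → ℝ) (_ : f ∈ LocRes M) =>
      TopologicalSpace.induced f inferInstance) _ (const_mem_locRes 0)
  exact IsOpen.mono (t₂ := initialTopology (LocRes M)) hU hle

theorem locRes_isDiffStructure : IsDiffStructure (LocRes M) := by
  constructor
  · intro m g hg f hf q
    choose V hVo hVq gg hgg hm using fun i => hf i q
    refine ⟨⋂ i, V i, isOpen_iInter_of_finite hVo, mem_iInter.2 hVq,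
      fun x => g (fun i => gg i x), hg.comp (contDiff_pi.2 hgg), ?_⟩
    intro x hx
    simp only
    congr 1
    ext i
    exact hm i x (mem_iInter.1 hx i)
  · intro h hh q
    obtain ⟨U, hUo, hqU, a, haG, hha⟩ := hh q
    obtain ⟨W, hWo, hWU⟩ := isOpen_induced_iff.mp (locRes_open_isOpen hUo)
    obtain ⟨Va, hVao, hVaq, ga, hga, hma⟩ := haG q
    refine ⟨W ∩ Va, hWo.inter hVao, ⟨?_, hVaq⟩, ga, hga, ?_⟩
    · rw [← hWU] at hqU; exact hqU
    · intro x hx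
      have hxU : x ∈ U := by rw [← hWU]; exact hx.1
      rw [hha x hxU, hma x hx.2]

variable {F : Set (↥M → ℝ)}

theorem F_subset_locRes
    (hF : IsGeneratedDiffStructure
      (pullbackFuncs (Subtype.val : M → (Fin n → ℝ)) {g | ContDiff ℝ (⊤ : ℕ∞) g}) F) :
    F ⊆ LocRes M := by
  refine hF.2.2 _ locRes_isDiffStructure ?_
  rintro f ⟨g, hg, rfl⟩
  exact fun q => ⟨univ, isOpen_univ, trivial, g, hg, fun x _ => rfl⟩

/-- The `i`-th coordinate function on `M`. -/
def coordFn (M : Set (Fin n → ℝ)) (i : Fin n) : ↥M → ℝ := fun q => (q : Fin n → ℝ) i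

theorem coord_mem
    (hF : IsGeneratedDiffStructure
      (pullbackFuncs (Subtype.val : M → (Fin n → ℝ)) {g | ContDiff ℝ (⊤ : ℕ∞) g}) F) (i : Fin n) :
    coordFn M i ∈ F :=
  hF.2.1 ⟨fun y => y i,
    show ContDiff ℝ (⊤ : ℕ∞) (fun y : Fin n → ℝ => y i) from
      (ContinuousLinearMap.proj i : ((Fin n → ℝ)) →L[ℝ] ℝ).contDiff, rfl⟩

end MaxCurveAux


namespace MaxCurveAux

variable {n : ℕ} {M : Set (Fin n → ℝ)} {F : Set (↥M → ℝ)} {v : (↥M → ℝ) → (↥M → ℝ)}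

theorem hasDerivWithinAt_singleton' {E : Type*} [NormedAddCommGroup E] [NormedSpace ℝ E]
    (f : ℝ → E) (x : ℝ) (c : E) : HasDerivWithinAt f c {x} x := by
  simp only [HasDerivWithinAt, nhdsWithin_singleton, hasDerivAtFilter_iff_isLittleO,
    Asymptotics.isLittleO_pure]
  simp

theorem curve_deriv
    (hF : IsGeneratedDiffStructure
      (pullbackFuncs (Subtype.val : M → (Fin n → ℝ)) {g | ContDiff ℝ (⊤ : ℕ∞) g}) F)
    {J : Set ℝ} {τ : ℝ → ↥M} (hc : IsDerivIntegralCurve F v J τ) {t : ℝ} (ht : t ∈ J) :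
    HasDerivWithinAt (fun s => (↑(τ s) : Fin n → ℝ)) (fun i => v (coordFn M i) (τ t)) J t :=
  hasDerivWithinAt_pi.2 fun i => (hc.2.2 _ (coord_mem hF i)).2 t ht

theorem curve_contOn
    (hF : IsGeneratedDiffStructure
      (pullbackFuncs (Subtype.val : M → (Fin n → ℝ)) {g | ContDiff ℝ (⊤ : ℕ∞) g}) F)
    {J : Set ℝ} {τ : ℝ → ↥M} (hc : IsDerivIntegralCurve F v J τ) :
    ContinuousOn (fun s => (↑(τ s) : Fin n → ℝ)) J :=
  fun t ht => (curve_deriv hF hc ht).continuousWithinAt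

theorem loc_lip
    (hF : IsGeneratedDiffStructure
      (pullbackFuncs (Subtype.val : M → (Fin n → ℝ)) {g | ContDiff ℝ (⊤ : ℕ∞) g}) F)
    (hv : IsCInftyDerivation F v) (q : ↥M) :
    ∃ r > (0:ℝ), ∃ K : NNReal, ∃ B : (Fin n → ℝ) → (Fin n → ℝ),
      ContDiff ℝ (⊤ : ℕ∞) B ∧ LipschitzOnWith K B (Metric.closedBall (q : Fin n → ℝ) r) ∧
      ∀ x : ↥M, (x : Fin n → ℝ) ∈ Metric.closedBall (q : Fin n → ℝ) r →
        (fun i => v (coordFn M i) x) = B (x : Fin n → ℝ) := by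
  choose V hVo hVq g hg hm using fun i : Fin n =>
    F_subset_locRes hF (hv.1 (coord_mem hF i)) q
  have hBc : ContDiff ℝ (⊤ : ℕ∞) (fun y => fun i => g i y : (Fin n → ℝ) → (Fin n → ℝ)) :=
    contDiff_pi.2 hg
  obtain ⟨K, t, ht, hK⟩ := (hBc.contDiffAt.of_le (by simp) :
    ContDiffAt ℝ 1 (fun y => fun i => g i y) ((q : Fin n → ℝ))).exists_lipschitzOnWith
  have hVn : (⋂ i, V i) ∈ 𝓝 (q : Fin n → ℝ) :=
    (isOpen_iInter_of_finite hVo).mem_nhds (Set.mem_iInter.2 hVq)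
  obtain ⟨r, hr0, hrsub⟩ := Metric.nhds_basis_closedBall.mem_iff.1 (Filter.inter_mem ht hVn)
  refine ⟨r, hr0, K, _, hBc, hK.mono (fun y hy => (hrsub hy).1), ?_⟩
  intro x hx
  funext i
  exact hm i x (Set.mem_iInter.1 (hrsub hx).2 i)

theorem stay_ball {c : ℝ → (Fin n → ℝ)} {J : Set ℝ} {u : ℝ}
    (hc : ContinuousWithinAt c J u) {r : ℝ} (hr : 0 < r) :
    ∃ δ > (0:ℝ), ∀ s ∈ J, |s - u| ≤ δ → c s ∈ Metric.closedBall (c u) r := by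
  have h2 := hc.preimage_mem_nhdsWithin (Metric.closedBall_mem_nhds (c u) hr)
  rw [mem_nhdsWithin] at h2
  obtain ⟨U, hUo, hUu, hsub⟩ := h2
  obtain ⟨ε, hε, hball⟩ := Metric.isOpen_iff.1 hUo u hUu
  refine ⟨ε/2, half_pos hε, fun s hs hd => hsub ⟨hball ?_, hs⟩⟩
  rw [Metric.mem_ball, Real.dist_eq]
  calc |s - u| ≤ ε/2 := hd
    _ < ε := half_lt_self hε

theorem local_agree
    (hF : IsGeneratedDiffStructure
      (pullbackFuncs (Subtype.val : M → (Fin n → ℝ)) {g | ContDiff ℝ (⊤ : ℕ∞) g}) F)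
    (hv : IsCInftyDerivation F v)
    {J₁ J₂ : Set ℝ} {τ₁ τ₂ : ℝ → ↥M}
    (h₁ : IsDerivIntegralCurve F v J₁ τ₁) (h₂ : IsDerivIntegralCurve F v J₂ τ₂)
    {u : ℝ} (hu₁ : u ∈ J₁) (hu₂ : u ∈ J₂) (huv : τ₁ u = τ₂ u) :
    ∃ δ > (0:ℝ), ∀ t, t ∈ J₁ → t ∈ J₂ → |t - u| ≤ δ → τ₁ t = τ₂ t := by
  obtain ⟨r, hr, K, B, hBc, hlip, hm⟩ := loc_lip hF hv (τ₁ u)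
  obtain ⟨δ₁, hδ₁, hball₁⟩ := stay_ball ((curve_contOn hF h₁) u hu₁) hr
  obtain ⟨δ₂, hδ₂, hball₂⟩ := stay_ball ((curve_contOn hF h₂) u hu₂) hr
  have hc21 : (↑(τ₂ u) : Fin n → ℝ) = ↑(τ₁ u) := congrArg Subtype.val huv.symm
  rw [hc21] at hball₂
  have hI₁ : Set.OrdConnected J₁ := h₁.2.1.ordConnected
  have hI₂ : Set.OrdConnected J₂ := h₂.2.1.ordConnected
  refine ⟨min δ₁ δ₂, lt_min hδ₁ hδ₂, ?_⟩
  intro t ht₁ ht₂ htd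
  have htd₁ : |t - u| ≤ δ₁ := le_trans htd (min_le_left _ _)
  have htd₂ : |t - u| ≤ δ₂ := le_trans htd (min_le_right _ _)
  rcases le_total u t with hut | htu
  · have hIcc₁ : Set.Icc u t ⊆ J₁ := hI₁.out hu₁ ht₁
    have hIcc₂ : Set.Icc u t ⊆ J₂ := hI₂.out hu₂ ht₂
    have habs : ∀ s ∈ Set.Icc u t, |s - u| ≤ min δ₁ δ₂ := by
      intro s hs
      rw [abs_of_nonneg (sub_nonneg.2 hs.1)]
      rw [abs_of_nonneg (sub_nonneg.2 hut)] at htd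
      linarith [hs.2]
    have hb₁ : ∀ s ∈ Set.Icc u t, (↑(τ₁ s) : Fin n → ℝ) ∈
        Metric.closedBall (↑(τ₁ u) : Fin n → ℝ) r :=
      fun s hs => hball₁ s (hIcc₁ hs) (le_trans (habs s hs) (min_le_left _ _))
    have hb₂ : ∀ s ∈ Set.Icc u t, (↑(τ₂ s) : Fin n → ℝ) ∈
        Metric.closedBall (↑(τ₁ u) : Fin n → ℝ) r :=
      fun s hs => hball₂ s (hIcc₂ hs) (le_trans (habs s hs) (min_le_right _ _))
    have key : Set.EqOn (fun s => (↑(τ₁ s) : Fin n → ℝ)) (fun s => (↑(τ₂ s) : Fin n → ℝ))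
        (Set.Icc u t) := by
      refine ODE_solution_unique_of_mem_Icc_right (v := fun _ y => B y)
        (s := fun _ => Metric.closedBall (↑(τ₁ u) : Fin n → ℝ) r) (fun _ _ => hlip)
        ((curve_contOn hF h₁).mono hIcc₁) ?_ (fun s hs => hb₁ s (Set.Ico_subset_Icc_self hs))
        ((curve_contOn hF h₂).mono hIcc₂) ?_ (fun s hs => hb₂ s (Set.Ico_subset_Icc_self hs))
        (congrArg Subtype.val huv)
      · intro s hs
        have hd := curve_deriv hF h₁ (hIcc₁ (Set.Ico_subset_Icc_self hs))
        rw [hm (τ₁ s) (hb₁ s (Set.Ico_subset_Icc_self hs))] at hd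
        exact (hd.mono hIcc₁).mono_of_mem_nhdsWithin (Icc_mem_nhdsGE_of_mem hs)
      · intro s hs
        have hd := curve_deriv hF h₂ (hIcc₂ (Set.Ico_subset_Icc_self hs))
        rw [hm (τ₂ s) (hb₂ s (Set.Ico_subset_Icc_self hs))] at hd
        exact (hd.mono hIcc₂).mono_of_mem_nhdsWithin (Icc_mem_nhdsGE_of_mem hs)
    exact Subtype.ext (key ⟨hut, le_refl t⟩)
  · have hIcc₁ : Set.Icc t u ⊆ J₁ := hI₁.out ht₁ hu₁
    have hIcc₂ : Set.Icc t u ⊆ J₂ := hI₂.out ht₂ hu₂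
    have habs : ∀ s ∈ Set.Icc t u, |s - u| ≤ min δ₁ δ₂ := by
      intro s hs
      rw [abs_sub_comm, abs_of_nonneg (sub_nonneg.2 hs.2)]
      rw [abs_sub_comm, abs_of_nonneg (sub_nonneg.2 htu)] at htd
      linarith [hs.1]
    have hb₁ : ∀ s ∈ Set.Icc t u, (↑(τ₁ s) : Fin n → ℝ) ∈
        Metric.closedBall (↑(τ₁ u) : Fin n → ℝ) r :=
      fun s hs => hball₁ s (hIcc₁ hs) (le_trans (habs s hs) (min_le_left _ _))
    have hb₂ : ∀ s ∈ Set.Icc t u, (↑(τ₂ s) : Fin n → ℝ) ∈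
        Metric.closedBall (↑(τ₁ u) : Fin n → ℝ) r :=
      fun s hs => hball₂ s (hIcc₂ hs) (le_trans (habs s hs) (min_le_right _ _))
    have key : Set.EqOn (fun s => (↑(τ₁ s) : Fin n → ℝ)) (fun s => (↑(τ₂ s) : Fin n → ℝ))
        (Set.Icc t u) := by
      refine ODE_solution_unique_of_mem_Icc_left (v := fun _ y => B y)
        (s := fun _ => Metric.closedBall (↑(τ₁ u) : Fin n → ℝ) r) (fun _ _ => hlip)
        ((curve_contOn hF h₁).mono hIcc₁) ?_ (fun s hs => hb₁ s (Set.Ioc_subset_Icc_self hs))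
        ((curve_contOn hF h₂).mono hIcc₂) ?_ (fun s hs => hb₂ s (Set.Ioc_subset_Icc_self hs))
        (congrArg Subtype.val huv)
      · intro s hs
        have hd := curve_deriv hF h₁ (hIcc₁ (Set.Ioc_subset_Icc_self hs))
        rw [hm (τ₁ s) (hb₁ s (Set.Ioc_subset_Icc_self hs))] at hd
        exact (hd.mono hIcc₁).mono_of_mem_nhdsWithin (Icc_mem_nhdsLE_of_mem hs)
      · intro s hs
        have hd := curve_deriv hF h₂ (hIcc₂ (Set.Ioc_subset_Icc_self hs))
        rw [hm (τ₂ s) (hb₂ s (Set.Ioc_subset_Icc_self hs))] at hd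
        exact (hd.mono hIcc₂).mono_of_mem_nhdsWithin (Icc_mem_nhdsLE_of_mem hs)
    exact Subtype.ext (key ⟨le_refl t, htu⟩)

theorem agree
    (hF : IsGeneratedDiffStructure
      (pullbackFuncs (Subtype.val : M → (Fin n → ℝ)) {g | ContDiff ℝ (⊤ : ℕ∞) g}) F)
    (hv : IsCInftyDerivation F v)
    {J₁ J₂ : Set ℝ} {τ₁ τ₂ : ℝ → ↥M}
    (h₁ : IsDerivIntegralCurve F v J₁ τ₁) (h₂ : IsDerivIntegralCurve F v J₂ τ₂)
    (h0 : τ₁ 0 = τ₂ 0) : ∀ t, t ∈ J₁ → t ∈ J₂ → τ₁ t = τ₂ t := by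
  have hKo : Set.OrdConnected (J₁ ∩ J₂) :=
    (h₁.2.1.ordConnected).inter (h₂.2.1.ordConnected)
  haveI := Subtype.preconnectedSpace hKo.isPreconnected
  set S : Set ↥(J₁ ∩ J₂) := {x | τ₁ ↑x = τ₂ ↑x} with hS
  have hcl : IsClosed S := by
    have hcc₁ : Continuous fun x : ↥(J₁ ∩ J₂) => (↑(τ₁ ↑x) : Fin n → ℝ) :=
      ((curve_contOn hF h₁).mono Set.inter_subset_left).restrict
    have hcc₂ : Continuous fun x : ↥(J₁ ∩ J₂) => (↑(τ₂ ↑x) : Fin n → ℝ) :=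
      ((curve_contOn hF h₂).mono Set.inter_subset_right).restrict
    have : S = {x : ↥(J₁ ∩ J₂) | (↑(τ₁ ↑x) : Fin n → ℝ) = ↑(τ₂ ↑x)} := by
      ext x
      exact ⟨fun h => congrArg Subtype.val h, fun h => Subtype.ext h⟩
    rw [this]
    exact isClosed_eq hcc₁ hcc₂
  have hop : IsOpen S := by
    rw [isOpen_iff_mem_nhds]
    intro x hx
    obtain ⟨δ, hδ, hloc⟩ := local_agree hF hv h₁ h₂ x.2.1 x.2.2 hx
    refine Filter.mem_of_superset
      ((((Metric.isOpen_ball (x := (↑x : ℝ)) (ε := δ))).preimage continuous_subtype_val).mem_nhds ?_) ?_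
    · exact Metric.mem_ball_self hδ
    · intro y hy
      exact hloc ↑y y.2.1 y.2.2 (le_of_lt (by rw [← Real.dist_eq]; exact hy))
  have huniv := IsClopen.eq_univ ⟨hcl, hop⟩ ⟨⟨0, h₁.1, h₂.1⟩, h0⟩
  intro t ht₁ ht₂
  have : (⟨t, ht₁, ht₂⟩ : ↥(J₁ ∩ J₂)) ∈ S := by rw [huniv]; trivial
  exact this

end MaxCurveAux

namespace MaxCurveAux

variable {n : ℕ} {M : Set (Fin n → ℝ)} {F : Set (↥M → ℝ)} {v : (↥M → ℝ) → (↥M → ℝ)}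

theorem witness_iteratedDeriv (hv : IsCInftyDerivation F v)
    {a b : ℝ} (hab : a < b) {τ : ℝ → ↥M}
    (hder : ∀ f ∈ F, ∀ s ∈ Set.Icc a b,
      HasDerivWithinAt (fun t => f (τ t)) (v f (τ s)) (Set.Icc a b) s) :
    ∀ (k : ℕ) (f : ↥M → ℝ), f ∈ F → ∀ g : ℝ → ℝ, ContDiff ℝ (⊤ : ℕ∞) g →
      (∀ s ∈ Set.Icc a b, g s = f (τ s)) → ∀ t ∈ Set.Icc a b,
      iteratedDeriv k g t = (v^[k] f) (τ t) := by
  intro k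
  induction k with
  | zero => intro f _ g _ hgf t ht; simpa using hgf t ht
  | succ k ih =>
    intro f hf g hg hgf t ht
    rw [iteratedDeriv_succ']
    have hgd : ContDiff ℝ (⊤ : ℕ∞) (deriv g) :=
      (contDiff_infty_iff_deriv.1 hg).2
    have hmatch : ∀ s ∈ Set.Icc a b, deriv g s = (v f) (τ s) := by
      intro s hs
      have h1 : HasDerivWithinAt g (v f (τ s)) (Set.Icc a b) s :=
        (hder f hf s hs).congr (fun y hy => hgf y hy) (hgf s hs)
      have h2 : HasDerivWithinAt g (deriv g s) (Set.Icc a b) s :=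
        ((hg.differentiable (by simp)) s).hasDerivAt.hasDerivWithinAt
      have u := (uniqueDiffOn_Icc hab) s hs
      exact (h2.derivWithin u).symm.trans (h1.derivWithin u)
    have hres := ih (v f) (hv.1 hf) (deriv g) hgd hmatch t ht
    rw [hres, Function.iterate_succ_apply]

theorem flat_ext (n : ℕ) : ∀ h : ℝ → ℝ, ContDiff ℝ (⊤ : ℕ∞) h → (∀ k, iteratedDeriv k h 0 = 0) →
    ContDiff ℝ n (fun s => if 0 ≤ s then h s else 0) := by
  induction n with
  | zero =>
    intro h hh hd
    refine contDiff_zero.2 ?_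
    refine Continuous.if_le hh.continuous continuous_const continuous_const continuous_id ?_
    intro x hx
    subst hx
    simpa using hd 0
  | succ n ih =>
    intro h hh hd
    have hh' := contDiff_infty_iff_deriv.1 hh
    have hD : ∀ s, HasDerivAt (fun s => if 0 ≤ s then h s else 0)
        (if 0 ≤ s then deriv h s else 0) s := by
      intro s
      rcases lt_trichotomy s 0 with hs | hs | hs
      · rw [if_neg (not_le.2 hs)]
        refine (hasDerivAt_const s (0:ℝ)).congr_of_eventuallyEq ?_
        filter_upwards [Iio_mem_nhds hs] with y hy
        simp [not_le.2 (show y < 0 from hy)]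
      · subst hs
        have h10 : deriv h 0 = 0 := by simpa using hd 1
        rw [if_pos le_rfl, h10]
        have h00 : h 0 = 0 := by simpa using hd 0
        have hA : HasDerivWithinAt (fun s => if 0 ≤ s then h s else 0) 0 (Iic 0) 0 :=
          (hasDerivWithinAt_const (0:ℝ) (Iic 0) (0:ℝ)).congr
            (fun y hy => by
              rcases (show y ≤ 0 from hy).lt_or_eq with h1 | h1
              · simp [not_le.2 h1]
              · subst h1; simp [h00])
            (by simp [h00])
        have hB : HasDerivWithinAt (fun s => if 0 ≤ s then h s else 0) 0 (Ici 0) 0 := by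
          have h3 : HasDerivWithinAt h (deriv h 0) (Ici 0) 0 := (hh'.1 0).hasDerivAt.hasDerivWithinAt
          rw [h10] at h3
          exact h3.congr
            (fun y hy => by simp [show (0:ℝ) ≤ y from hy]) (by simp)
        have := hA.union hB
        rw [Iic_union_Ici] at this
        exact hasDerivWithinAt_univ.1 this
      · rw [if_pos hs.le]
        refine (hh'.1 s).hasDerivAt.congr_of_eventuallyEq ?_
        filter_upwards [Ioi_mem_nhds hs] with y hy
        simp [le_of_lt (show 0 < y from hy)]
    have hderiv : deriv (fun s => if 0 ≤ s then h s else 0) =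
        fun s => if 0 ≤ s then deriv h s else 0 := funext fun s => (hD s).deriv
    refine (contDiff_succ_iff_deriv (n := (n : WithTop ℕ∞))).2
      ⟨fun s => (hD s).differentiableAt, by simp, ?_⟩
    rw [hderiv]
    exact ih (deriv h) hh'.2 (fun k => by rw [← iteratedDeriv_succ']; exact hd (k+1))

theorem glue_smooth {gm gq : ℝ → ℝ} (hm : ContDiff ℝ (⊤ : ℕ∞) gm) (hq : ContDiff ℝ (⊤ : ℕ∞) gq)
    (hd : ∀ k, iteratedDeriv k gm 0 = iteratedDeriv k gq 0) :
    ∃ G : ℝ → ℝ, ContDiff ℝ (⊤ : ℕ∞) G ∧ (∀ s, s ≤ 0 → G s = gm s) ∧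
      (∀ s, 0 ≤ s → G s = gq s) := by
  have hsub : ContDiff ℝ (⊤ : ℕ∞) (gq - gm) := hq.sub hm
  have hz : ∀ k, iteratedDeriv k (gq - gm) 0 = 0 := by
    intro k
    rw [iteratedDeriv_sub (hq.contDiffAt.of_le (by exact_mod_cast le_top))
      (hm.contDiffAt.of_le (by exact_mod_cast le_top)), hd k, sub_self]
  have h00 : (gq - gm) 0 = 0 := by simpa using hz 0
  refine ⟨fun s => gm s + (if 0 ≤ s then (gq - gm) s else 0), ?_, ?_, ?_⟩
  · exact hm.add (contDiff_infty.2 fun n => flat_ext n _ hsub hz)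
  · intro s hs
    rcases hs.lt_or_eq with h1 | h1
    · simp [not_le.2 h1]
    · subst h1; simp only [le_refl, if_true, h00, add_zero]
  · intro s hs
    simp [hs]

theorem singleton_curve (p : ↥M) :
    IsDerivIntegralCurve F v {(0:ℝ)} (fun _ => p) := by
  refine ⟨rfl, isPreconnected_singleton, fun f _ => ⟨?_, ?_⟩⟩
  · intro t _
    exact ⟨1, one_pos, fun _ => f p, contDiff_const, fun s _ _ => rfl⟩
  · intro t ht
    rw [Set.mem_singleton_iff] at ht
    subst ht
    exact hasDerivWithinAt_singleton' _ _ _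

end MaxCurveAux

/-- for `M ⊆ ℝⁿ` with the subspace differential structure `F` and a
derivation `v` of `F`, every point `p ∈ M` has a unique maximal integral curve of `v`
starting at `p`. -/
theorem exists_unique_maximal_integral_curve
    {n : ℕ} (M : Set (Fin n → ℝ)) (F : Set (↥M → ℝ))
    (hF : IsGeneratedDiffStructure
      (pullbackFuncs (Subtype.val : M → (Fin n → ℝ)) {g | ContDiff ℝ (⊤ : ℕ∞) g}) F)
    (v : (↥M → ℝ) → (↥M → ℝ)) (hv : IsCInftyDerivation F v)
    (p : M) :
    ∃ (I : Set ℝ) (γ : ℝ → M),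
      IsMaximalDerivIntegralCurve F v I γ ∧ γ 0 = p ∧
      ∀ (J : Set ℝ) (τ : ℝ → M),
        IsMaximalDerivIntegralCurve F v J τ → τ 0 = p → J = I ∧ Set.EqOn τ γ I := by
  classical
  set 𝒮 : Set (Set ℝ × (ℝ → ↥M)) :=
    {c | IsDerivIntegralCurve F v c.1 c.2 ∧ c.2 0 = p} with h𝒮
  have hsing : ((({(0:ℝ)} : Set ℝ), fun _ => p) : Set ℝ × (ℝ → ↥M)) ∈ 𝒮 :=
    ⟨MaxCurveAux.singleton_curve p, rfl⟩
  set I : Set ℝ := {t | ∃ c ∈ 𝒮, t ∈ c.1} with hIdef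
  have hIc : ∀ c ∈ 𝒮, c.1 ⊆ I := fun c hc t ht => ⟨c, hc, ht⟩
  have hI0 : (0:ℝ) ∈ I := ⟨_, hsing, rfl⟩
  have hγex : ∃ γ : ℝ → ↥M, ∀ c ∈ 𝒮, ∀ t ∈ c.1, γ t = c.2 t := by
    refine ⟨fun t => if h : ∃ c ∈ 𝒮, t ∈ c.1 then h.choose.2 t else p, ?_⟩
    intro c hc t ht
    have hex : ∃ c' ∈ 𝒮, t ∈ c'.1 := ⟨c, hc, ht⟩
    simp only [dif_pos hex]
    exact MaxCurveAux.agree hF hv hex.choose_spec.1.1 hc.1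
      (hex.choose_spec.1.2.trans hc.2.symm) t hex.choose_spec.2 ht
  obtain ⟨γ, hγ⟩ := hγex
  have hγ0 : γ 0 = p := hγ _ hsing 0 rfl
  have hIpre : IsPreconnected I := by
    have hrw : I = ⋃₀ (Prod.fst '' 𝒮) := by
      ext t
      simp only [hIdef, Set.mem_setOf_eq, Set.sUnion_image, Set.mem_iUnion]
      constructor
      · rintro ⟨c, hc, htc⟩; exact ⟨c, hc, htc⟩
      · rintro ⟨c, hc, htc⟩; exact ⟨c, hc, htc⟩
    rw [hrw]
    refine isPreconnected_sUnion 0 _ ?_ ?_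
    · rintro s ⟨c, hc, rfl⟩; exact hc.1.1
    · rintro s ⟨c, hc, rfl⟩; exact hc.1.2.1
  have hcov : ∀ t ∈ I, t ≠ 0 → ∃ c ∈ 𝒮, t ∈ c.1 ∧
      ∃ ε > (0:ℝ), ∀ s ∈ I, |s - t| < ε → s ∈ c.1 := by
    intro t ht hne
    obtain ⟨c, hc, htc⟩ := ht
    have hcord : Set.OrdConnected c.1 := hc.1.2.1.ordConnected
    rcases hne.lt_or_gt with hneg | hpos
    · by_cases hex : ∃ s ∈ I, s < t
      · obtain ⟨s', hs'I, hs't⟩ := hex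
        obtain ⟨c', hc', hs'c⟩ := hs'I
        have hcord' : Set.OrdConnected c'.1 := hc'.1.2.1.ordConnected
        have htc' : t ∈ c'.1 := hcord'.out hs'c hc'.1.1 ⟨le_of_lt hs't, le_of_lt hneg⟩
        refine ⟨c', hc', htc', min (-t) (t - s'), lt_min (by linarith) (by linarith), ?_⟩
        intro s hsI habs
        rw [abs_lt] at habs
        refine hcord'.out hs'c hc'.1.1 ⟨?_, ?_⟩
        · have := min_le_right (-t) (t - s'); linarith [habs.1]
        · have := min_le_left (-t) (t - s'); linarith [habs.2]
      · push_neg at hex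
        refine ⟨c, hc, htc, -t, by linarith, ?_⟩
        intro s hsI habs
        rw [abs_lt] at habs
        exact hcord.out htc hc.1.1 ⟨hex s hsI, by linarith [habs.2]⟩
    · by_cases hex : ∃ s ∈ I, t < s
      · obtain ⟨s', hs'I, hts'⟩ := hex
        obtain ⟨c', hc', hs'c⟩ := hs'I
        have hcord' : Set.OrdConnected c'.1 := hc'.1.2.1.ordConnected
        have htc' : t ∈ c'.1 := hcord'.out hc'.1.1 hs'c ⟨le_of_lt hpos, le_of_lt hts'⟩
        refine ⟨c', hc', htc', min t (s' - t), lt_min hpos (by linarith), ?_⟩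
        intro s hsI habs
        rw [abs_lt] at habs
        refine hcord'.out hc'.1.1 hs'c ⟨?_, ?_⟩
        · have := min_le_left t (s' - t); linarith [habs.1]
        · have := min_le_right t (s' - t); linarith [habs.2]
      · push_neg at hex
        refine ⟨c, hc, htc, t, hpos, ?_⟩
        intro s hsI habs
        rw [abs_lt] at habs
        exact hcord.out hc.1.1 htc ⟨by linarith [habs.1], hex s hsI⟩
  have hcurve : IsDerivIntegralCurve F v I γ := by
    refine ⟨hI0, hIpre, fun f hf => ⟨?_, ?_⟩⟩
    · -- smoothness
      intro t htI
      by_cases ht0 : t = 0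
      · subst ht0
        by_cases hL : ∃ s ∈ I, s < 0
        · obtain ⟨sm, hsmI, hsmneg⟩ := hL
          obtain ⟨cm, hcm, hsmc⟩ := hsmI
          have hordm : Set.OrdConnected cm.1 := hcm.1.2.1.ordConnected
          obtain ⟨εm, hεm, gm, hgm, hmm⟩ := (hcm.1.2.2 f hf).1 0 hcm.1.1
          have hα : ∀ k, iteratedDeriv k gm 0 = (v^[k] f) p := by
            set a := max sm (-(εm/2)) with ha
            have haneg : a < 0 := max_lt hsmneg (by linarith)
            have hamem : a ∈ cm.1 :=
              hordm.out hsmc hcm.1.1 ⟨le_max_left _ _, le_of_lt haneg⟩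
            have haIcc : Set.Icc a 0 ⊆ cm.1 := hordm.out hamem hcm.1.1
            have hder : ∀ f' ∈ F, ∀ s ∈ Set.Icc a 0,
                HasDerivWithinAt (fun u => f' (cm.2 u)) (v f' (cm.2 s)) (Set.Icc a 0) s :=
              fun f' hf' s hs => ((hcm.1.2.2 f' hf').2 s (haIcc hs)).mono haIcc
            intro k
            have hgmatch : ∀ s ∈ Set.Icc a 0, gm s = f (cm.2 s) := by
              intro s hs
              refine (hmm s (haIcc hs) ?_).symm
              rw [sub_zero, abs_of_nonpos hs.2]
              have h1 : -(εm/2) ≤ a := le_max_right _ _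
              have h2 := hs.1
              linarith
            have hres := MaxCurveAux.witness_iteratedDeriv hv haneg hder k f hf gm hgm
              hgmatch 0 ⟨le_of_lt haneg, le_refl 0⟩
            rw [hres, hcm.2]
          by_cases hR : ∃ s ∈ I, 0 < s
          · obtain ⟨sq, hsqI, hsqpos⟩ := hR
            obtain ⟨cq, hcq, hsqc⟩ := hsqI
            have hordq : Set.OrdConnected cq.1 := hcq.1.2.1.ordConnected
            obtain ⟨εq, hεq, gq, hgq, hmq⟩ := (hcq.1.2.2 f hf).1 0 hcq.1.1
            have hβ : ∀ k, iteratedDeriv k gq 0 = (v^[k] f) p := by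
              set b := min sq (εq/2) with hb
              have hbpos : 0 < b := lt_min hsqpos (by linarith)
              have hbmem : b ∈ cq.1 :=
                hordq.out hcq.1.1 hsqc ⟨le_of_lt hbpos, min_le_left _ _⟩
              have hbIcc : Set.Icc 0 b ⊆ cq.1 := hordq.out hcq.1.1 hbmem
              have hder : ∀ f' ∈ F, ∀ s ∈ Set.Icc 0 b,
                  HasDerivWithinAt (fun u => f' (cq.2 u)) (v f' (cq.2 s)) (Set.Icc 0 b) s :=
                fun f' hf' s hs => ((hcq.1.2.2 f' hf').2 s (hbIcc hs)).mono hbIcc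
              intro k
              have hgmatch : ∀ s ∈ Set.Icc 0 b, gq s = f (cq.2 s) := by
                intro s hs
                refine (hmq s (hbIcc hs) ?_).symm
                rw [sub_zero, abs_of_nonneg hs.1]
                have h1 : b ≤ εq/2 := min_le_right _ _
                have h2 := hs.2
                linarith
              have hres := MaxCurveAux.witness_iteratedDeriv hv hbpos hder k f hf gq hgq
                hgmatch 0 ⟨le_refl 0, le_of_lt hbpos⟩
              rw [hres, hcq.2]
            obtain ⟨G, hG, hGm, hGq⟩ :=
              MaxCurveAux.glue_smooth hgm hgq (fun k => (hα k).trans (hβ k).symm)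
            refine ⟨min (min (-sm) εm) (min sq εq),
              lt_min (lt_min (by linarith) hεm) (lt_min hsqpos hεq), G, hG, ?_⟩
            intro s hsI habs
            rw [sub_zero] at habs
            rcases le_total s 0 with hs0 | hs0
            · have habs' : -s < min (-sm) εm :=
                lt_of_le_of_lt (neg_le_abs s) (lt_of_lt_of_le habs (min_le_left _ _))
              have hsc : s ∈ cm.1 := hordm.out hsmc hcm.1.1
                ⟨by have := min_le_left (-sm) εm; linarith, hs0⟩
              show f (γ s) = G s
              rw [hγ cm hcm s hsc, hGm s hs0]
              refine hmm s hsc ?_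
              rw [sub_zero]
              have := min_le_right (-sm) εm
              have := abs_of_nonpos hs0
              linarith
            · have habs' : s < min sq εq :=
                lt_of_le_of_lt (le_abs_self s) (lt_of_lt_of_le habs (min_le_right _ _))
              have hsc : s ∈ cq.1 := hordq.out hcq.1.1 hsqc
                ⟨hs0, by have := min_le_left sq εq; linarith⟩
              show f (γ s) = G s
              rw [hγ cq hcq s hsc, hGq s hs0]
              refine hmq s hsc ?_
              rw [sub_zero, abs_of_nonneg hs0]
              have := min_le_right sq εq
              linarith
          · push_neg at hR
            refine ⟨min (-sm) εm, lt_min (by linarith) hεm, gm, hgm, ?_⟩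
            intro s hsI habs
            rw [sub_zero] at habs
            have hs0 : s ≤ 0 := hR s hsI
            have hsc : s ∈ cm.1 := hordm.out hsmc hcm.1.1
              ⟨by have h1 := neg_le_abs s; have := min_le_left (-sm) εm; linarith, hs0⟩
            show f (γ s) = gm s
            rw [hγ cm hcm s hsc]
            refine hmm s hsc ?_
            rw [sub_zero]
            have := min_le_right (-sm) εm
            have := abs_of_nonpos hs0
            linarith
        · by_cases hR : ∃ s ∈ I, 0 < s
          · obtain ⟨sq, hsqI, hsqpos⟩ := hR
            obtain ⟨cq, hcq, hsqc⟩ := hsqI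
            have hordq : Set.OrdConnected cq.1 := hcq.1.2.1.ordConnected
            obtain ⟨εq, hεq, gq, hgq, hmq⟩ := (hcq.1.2.2 f hf).1 0 hcq.1.1
            push_neg at hL
            refine ⟨min sq εq, lt_min hsqpos hεq, gq, hgq, ?_⟩
            intro s hsI habs
            rw [sub_zero] at habs
            have hs0 : 0 ≤ s := hL s hsI
            have hsc : s ∈ cq.1 := hordq.out hcq.1.1 hsqc
              ⟨hs0, by have h1 := le_abs_self s; have := min_le_left sq εq; linarith⟩
            show f (γ s) = gq s
            rw [hγ cq hcq s hsc]
            refine hmq s hsc ?_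
            rw [sub_zero]
            have h2 := abs_of_nonneg hs0
            have := min_le_right sq εq
            linarith
          · push_neg at hL hR
            refine ⟨1, one_pos, fun _ => f p, contDiff_const, ?_⟩
            intro s hsI _
            have hs0 : s = 0 := le_antisymm (hR s hsI) (hL s hsI)
            subst hs0
            show f (γ 0) = f p
            rw [hγ0]
      · obtain ⟨c, hc, htc, ε₁, hε₁, hcov'⟩ := hcov t htI ht0
        obtain ⟨ε₂, hε₂, g, hg, hm⟩ := (hc.1.2.2 f hf).1 t htc
        refine ⟨min ε₁ ε₂, lt_min hε₁ hε₂, g, hg, ?_⟩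
        intro s hsI habs
        have hsc : s ∈ c.1 := hcov' s hsI (lt_of_lt_of_le habs (min_le_left _ _))
        show f (γ s) = g s
        rw [hγ c hc s hsc]
        exact hm s hsc (lt_of_lt_of_le habs (min_le_right _ _))
    · -- derivative
      intro t htI
      have hpiece : ∀ c ∈ 𝒮, HasDerivWithinAt (fun s => f (γ s)) (v f (γ 0)) c.1 0 := by
        intro c hc
        have hd := (hc.1.2.2 f hf).2 0 hc.1.1
        have hval : v f (c.2 0) = v f (γ 0) := by rw [hc.2, hγ0]
        rw [hval] at hd
        exact hd.congr (fun y hy => congrArg f (hγ c hc y hy))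
          (congrArg f (hγ c hc 0 hc.1.1))
      by_cases ht0 : t = 0
      · subst ht0
        by_cases hL : ∃ s ∈ I, s < 0 <;> by_cases hR : ∃ s ∈ I, 0 < s
        · obtain ⟨sm, hsmI, hsmneg⟩ := hL
          obtain ⟨cm, hcm, hsmc⟩ := hsmI
          obtain ⟨sq, hsqI, hsqpos⟩ := hR
          obtain ⟨cq, hcq, hsqc⟩ := hsqI
          refine ((hpiece cm hcm).union (hpiece cq hcq)).mono_of_mem_nhdsWithin ?_
          rw [mem_nhdsWithin]
          refine ⟨Set.Ioo sm sq, isOpen_Ioo, ⟨hsmneg, hsqpos⟩, ?_⟩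
          rintro y ⟨hyO, hyI⟩
          rcases le_total y 0 with hy0 | hy0
          · exact Or.inl ((hcm.1.2.1.ordConnected).out hsmc hcm.1.1 ⟨le_of_lt hyO.1, hy0⟩)
          · exact Or.inr ((hcq.1.2.1.ordConnected).out hcq.1.1 hsqc ⟨hy0, le_of_lt hyO.2⟩)
        · obtain ⟨sm, hsmI, hsmneg⟩ := hL
          obtain ⟨cm, hcm, hsmc⟩ := hsmI
          push_neg at hR
          refine (hpiece cm hcm).mono_of_mem_nhdsWithin ?_
          rw [mem_nhdsWithin]
          refine ⟨Set.Ioo sm 1, isOpen_Ioo, ⟨hsmneg, one_pos⟩, ?_⟩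
          rintro y ⟨hyO, hyI⟩
          exact (hcm.1.2.1.ordConnected).out hsmc hcm.1.1 ⟨le_of_lt hyO.1, hR y hyI⟩
        · obtain ⟨sq, hsqI, hsqpos⟩ := hR
          obtain ⟨cq, hcq, hsqc⟩ := hsqI
          push_neg at hL
          refine (hpiece cq hcq).mono_of_mem_nhdsWithin ?_
          rw [mem_nhdsWithin]
          refine ⟨Set.Ioo (-1) sq, isOpen_Ioo, ⟨by linarith, hsqpos⟩, ?_⟩
          rintro y ⟨hyO, hyI⟩
          exact (hcq.1.2.1.ordConnected).out hcq.1.1 hsqc ⟨hL y hyI, le_of_lt hyO.2⟩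
        · push_neg at hL hR
          refine (MaxCurveAux.hasDerivWithinAt_singleton' (fun s => f (γ s)) 0
            (v f (γ 0))).mono_of_mem_nhdsWithin ?_
          rw [mem_nhdsWithin]
          refine ⟨Set.Ioo (-1) 1, isOpen_Ioo, ⟨by linarith, one_pos⟩, ?_⟩
          rintro y ⟨_, hyI⟩
          exact le_antisymm (hR y hyI) (hL y hyI)
      · obtain ⟨c, hc, htc, ε₁, hε₁, hcov'⟩ := hcov t htI ht0
        have hd := (hc.1.2.2 f hf).2 t htc
        have hval : v f (c.2 t) = v f (γ t) := by rw [hγ c hc t htc]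
        rw [hval] at hd
        have hd' : HasDerivWithinAt (fun s => f (γ s)) (v f (γ t)) c.1 t :=
          hd.congr (fun y hy => congrArg f (hγ c hc y hy)) (congrArg f (hγ c hc t htc))
        refine hd'.mono_of_mem_nhdsWithin ?_
        rw [mem_nhdsWithin]
        refine ⟨Set.Ioo (t - ε₁) (t + ε₁), isOpen_Ioo, ⟨by linarith, by linarith⟩, ?_⟩
        rintro y ⟨hyO, hyI⟩
        exact hcov' y hyI (abs_lt.2 ⟨by linarith [hyO.1], by linarith [hyO.2]⟩)
  refine ⟨I, γ, ⟨hcurve, ?_⟩, hγ0, ?_⟩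
  · intro J τ hJ hτ0
    have hmem : ((J, τ) : Set ℝ × (ℝ → ↥M)) ∈ 𝒮 := ⟨hJ, hτ0.trans hγ0⟩
    exact ⟨hIc _ hmem, fun t ht => (hγ _ hmem t ht).symm⟩
  · intro J τ hJmax hτ0
    have h1 := hJmax.2 I γ hcurve (hγ0.trans hτ0.symm)
    have hmem : ((J, τ) : Set ℝ × (ℝ → ↥M)) ∈ 𝒮 := ⟨hJmax.1, hτ0⟩
    have h2 : J ⊆ I ∧ Set.EqOn τ γ J := ⟨hIc _ hmem, fun t ht => (hγ _ hmem t ht).symm⟩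
    exact ⟨Set.Subset.antisymm h2.1 h1.1, fun t ht => h2.2 (h1.1 ht)⟩
end

section
/- If v is a derivation of the R-algebra C^∞(M) for a smooth manifold M, then the chain rule holds: for any n ≥ 1, any g ∈ C^∞(ℝⁿ), and any f₁, …, fₙ ∈ C^∞(M), v(g∘(f₁,…,fₙ)) = Σᵢ ((∂ᵢg)∘(f₁,…,fₙ)) · v(fᵢ). -/
open scoped Manifold BigOperators

open MeasureTheory Set
open scoped ContDiff Convolution

lemma hadamard_aux {n : ℕ} (g : (Fin n → ℝ) → ℝ) (hg : ContDiff ℝ ∞ g) (a : Fin n → ℝ) :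
    ∃ h : Fin n → ((Fin n → ℝ) → ℝ),
      (∀ i, ContDiff ℝ ∞ (h i)) ∧
      (∀ i, h i a = fderiv ℝ g a (Pi.single i 1)) ∧
      (∀ y, g y = g a + ∑ i, (y i - a i) * h i y) := by
  classical
  set φ : Fin n → (Fin n → ℝ) → ℝ → ℝ :=
    fun i p t => fderiv ℝ g (a + t • (p - a)) (Pi.single i 1) with hφdef
  have hφc : ∀ i, ContDiff ℝ ∞ (fun q : (Fin n → ℝ) × ℝ => φ i q.1 q.2) := by
    intro i
    have h1 : ContDiff ℝ ∞ (fun q : (Fin n → ℝ) × ℝ => a + q.2 • (q.1 - a)) :=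
      contDiff_const.add (contDiff_snd.smul (contDiff_fst.sub contDiff_const))
    have h2 : ContDiff ℝ ∞ (fderiv ℝ g) := hg.fderiv_right (m := ∞) (by norm_num)
    exact (h2.comp h1).clm_apply contDiff_const
  refine ⟨fun i p => ∫ t in (0:ℝ)..1, φ i p t, ?_, ?_, ?_⟩
  · -- smoothness
    intro i
    set χ : ContDiffBump (-(1/2) : ℝ) := ⟨1, 2, one_pos, one_lt_two⟩ with hχ
    set gg : (Fin n → ℝ) → ℝ → ℝ := fun p u => χ u * φ i p (-u) with hggdef
    set f0 : ℝ → ℝ := indicator (Ioc (0:ℝ) 1) (fun _ => (1:ℝ)) with hf0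
    have hf0int : Integrable f0 volume := by
      refine (integrableOn_const ?_).integrable_indicator measurableSet_Ioc
      simp [Real.volume_Ioc]
    have hconv : ContDiffOn ℝ ∞
        (fun p : Fin n → ℝ => (f0 ⋆[ContinuousLinearMap.mul ℝ ℝ, volume] gg p) 0) univ := by
      refine MeasureTheory.contDiffOn_convolution_right_with_param_comp
        (ContinuousLinearMap.mul ℝ ℝ) (contDiffOn_const)
        (k := Metric.closedBall (-(1/2) : ℝ) 2) isOpen_univ (isCompact_closedBall _ _) ?_
        hf0int.locallyIntegrable ?_
      · intro p x _ hx
        have : χ x = 0 := by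
          apply Function.notMem_support.mp
          rw [χ.support_eq]
          exact fun hmem => hx (Metric.ball_subset_closedBall hmem)
        simp [hggdef, this]
      · have : ContDiff ℝ ∞ (fun q : (Fin n → ℝ) × ℝ => χ q.2 * φ i q.1 (-q.2)) :=
          (χ.contDiff.comp contDiff_snd).mul
            ((hφc i).comp (contDiff_fst.prodMk contDiff_snd.neg))
        exact this.contDiffOn
    have key : ∀ p : Fin n → ℝ,
        (f0 ⋆[ContinuousLinearMap.mul ℝ ℝ, volume] gg p) 0 = ∫ t in (0:ℝ)..1, φ i p t := by
      intro p
      have e1 : ∀ t : ℝ, (ContinuousLinearMap.mul ℝ ℝ) (f0 t) (gg p (0 - t))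
          = indicator (Ioc (0:ℝ) 1) (fun t => χ (-t) * φ i p t) t := by
        intro t
        by_cases ht : t ∈ Ioc (0:ℝ) 1 <;>
          simp [hf0, hggdef, indicator_of_mem, indicator_of_notMem, ht]
      rw [convolution]
      simp only [e1]
      rw [integral_indicator measurableSet_Ioc]
      rw [setIntegral_congr_fun measurableSet_Ioc
        (g := fun t => φ i p t) ?_]
      · rw [intervalIntegral.integral_of_le zero_le_one]
      · intro t ht
        have : χ (-t) = 1 := by
          apply χ.one_of_mem_closedBall
          simp only [hχ]
          rw [Metric.mem_closedBall, Real.dist_eq]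
          rcases ht with ⟨h1, h2⟩
          rw [abs_le]; constructor <;> linarith
        simp [this]
    have : (fun p : Fin n → ℝ => ∫ t in (0:ℝ)..1, φ i p t)
        = fun p => (f0 ⋆[ContinuousLinearMap.mul ℝ ℝ, volume] gg p) 0 :=
      funext fun p => (key p).symm
    show ContDiff ℝ ∞ fun p : Fin n → ℝ => ∫ t in (0:ℝ)..1, φ i p t
    rw [this]
    exact contDiffOn_univ.mp hconv
  · intro i
    have : ∀ t : ℝ, φ i a t = fderiv ℝ g a (Pi.single i 1) := by
      intro t; simp [hφdef]
    simp only [this]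
    simp
  · intro y
    have hline : ∀ t : ℝ, HasDerivAt (fun t : ℝ => g (a + t • (y - a)))
        (fderiv ℝ g (a + t • (y - a)) (y - a)) t := by
      intro t
      have h1 : HasDerivAt (fun t : ℝ => a + t • (y - a)) (y - a) t := by
        simpa using ((hasDerivAt_id t).smul_const (y - a)).const_add a
      exact ((hg.differentiable (by norm_num)).differentiableAt.hasFDerivAt).comp_hasDerivAt t h1
    have hcont : Continuous fun t : ℝ => fderiv ℝ g (a + t • (y - a)) (y - a) := by
      have h2 : Continuous (fderiv ℝ g) := (hg.fderiv_right (m := ∞) (by norm_num)).continuous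
      exact (h2.comp (by continuity)).clm_apply continuous_const
    have hint : ∫ t in (0:ℝ)..1, fderiv ℝ g (a + t • (y - a)) (y - a) = g y - g a := by
      have := intervalIntegral.integral_eq_sub_of_hasDerivAt
        (f := fun t : ℝ => g (a + t • (y - a))) (fun t _ => hline t)
        (hcont.intervalIntegrable 0 1)
      simpa using this
    have hsingle : (y - a) = ∑ j, (y j - a j) • (Pi.single j 1 : Fin n → ℝ) := by
      ext k
      simp [Finset.sum_apply, Pi.single_apply]
    have hexp : ∀ p : Fin n → ℝ, fderiv ℝ g p (y - a)
        = ∑ j, (y j - a j) * fderiv ℝ g p (Pi.single j 1) := by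
      intro p
      conv_lhs => rw [hsingle]
      rw [map_sum]
      simp [smul_eq_mul]
    have hφcont : ∀ j, Continuous fun t : ℝ => φ j y t := fun j =>
      (hφc j).continuous.comp (continuous_const.prodMk continuous_id)
    have hswap : ∫ t in (0:ℝ)..1, fderiv ℝ g (a + t • (y - a)) (y - a)
        = ∑ j, (y j - a j) * ∫ t in (0:ℝ)..1, φ j y t := by
      have : ∀ t : ℝ, fderiv ℝ g (a + t • (y - a)) (y - a)
          = ∑ j, (y j - a j) * φ j y t := fun t => hexp _
      simp only [this]
      rw [intervalIntegral.integral_finset_sum]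
      · exact Finset.sum_congr rfl fun j _ => intervalIntegral.integral_const_mul _ _
      · intro j _
        exact (continuous_const.mul (hφcont j)).intervalIntegrable 0 1
    have := hint.symm.trans hswap
    linarith [this]


/-- an `ℝ`-algebra derivation `v` of `C^∞(M)` for a smooth manifold `M`
satisfies the chain rule: for smooth `g : ℝⁿ → ℝ` and `f₁, …, fₙ ∈ C^∞(M)`,
`v (g ∘ (f₁,…,fₙ)) = ∑ i, ((∂ᵢ g) ∘ (f₁,…,fₙ)) · v fᵢ`. -/
theorem manifold_derivation_chain_rule
    {m : ℕ} {M : Type*} [TopologicalSpace M]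
    [ChartedSpace (EuclideanSpace ℝ (Fin m)) M]
    [IsManifold (𝓡 m) ((⊤ : ℕ∞) : WithTop ℕ∞) M]
    [T2Space M] [SecondCountableTopology M]
    (v : (M → ℝ) → (M → ℝ))
    (hmaps : ∀ f : M → ℝ, ContMDiff (𝓡 m) 𝓘(ℝ, ℝ) (⊤ : ℕ∞) f →
      ContMDiff (𝓡 m) 𝓘(ℝ, ℝ) (⊤ : ℕ∞) (v f))
    (hadd : ∀ f g : M → ℝ, ContMDiff (𝓡 m) 𝓘(ℝ, ℝ) (⊤ : ℕ∞) f →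
      ContMDiff (𝓡 m) 𝓘(ℝ, ℝ) (⊤ : ℕ∞) g → v (f + g) = v f + v g)
    (hsmul : ∀ (r : ℝ) (f : M → ℝ), ContMDiff (𝓡 m) 𝓘(ℝ, ℝ) (⊤ : ℕ∞) f →
      v (r • f) = r • v f)
    (hleibniz : ∀ f g : M → ℝ, ContMDiff (𝓡 m) 𝓘(ℝ, ℝ) (⊤ : ℕ∞) f →
      ContMDiff (𝓡 m) 𝓘(ℝ, ℝ) (⊤ : ℕ∞) g → v (f * g) = v f * g + f * v g) :
    ∀ (n : ℕ), 1 ≤ n → ∀ (g : (Fin n → ℝ) → ℝ), ContDiff ℝ (⊤ : ℕ∞) g →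
      ∀ f : Fin n → (M → ℝ), (∀ i, ContMDiff (𝓡 m) 𝓘(ℝ, ℝ) (⊤ : ℕ∞) (f i)) →
      v (fun x => g fun i => f i x) =
        fun x => ∑ i, fderiv ℝ g (fun j => f j x) (Pi.single i 1) * v (f i) x := by
  intro n _ g hg f hf
  have hg' : ContDiff ℝ ∞ g := hg.of_le (by simp)
  funext x₀
  set a : Fin n → ℝ := fun i => f i x₀ with ha
  obtain ⟨h, hhs, hval, hrep⟩ := hadamard_aux g hg' a
  have hF : ContMDiff (𝓡 m) 𝓘(ℝ, Fin n → ℝ) (⊤ : ℕ∞) (fun x => fun i => f i x) :=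
    contMDiff_pi_space.2 hf
  have hone : ContMDiff (𝓡 m) 𝓘(ℝ, ℝ) (⊤ : ℕ∞) (fun _ : M => (1:ℝ)) := contMDiff_const
  have hconstS : ∀ c : ℝ, ContMDiff (𝓡 m) 𝓘(ℝ, ℝ) (⊤ : ℕ∞) (fun _ : M => c) :=
    fun c => contMDiff_const
  have hv1 : ∀ x, v (fun _ => (1:ℝ)) x = 0 := by
    intro x
    have h1 := hleibniz (fun _ => (1:ℝ)) (fun _ => (1:ℝ)) hone hone
    have h2 : ((fun _ : M => (1:ℝ)) * fun _ => (1:ℝ)) = fun _ : M => (1:ℝ) := by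
      funext y; simp
    rw [h2] at h1
    have h3 := congrFun h1 x
    simp only [Pi.add_apply, Pi.mul_apply, mul_one, one_mul] at h3
    linarith
  have hvconst : ∀ c : ℝ, ∀ x, v (fun _ : M => c) x = 0 := by
    intro c x
    have h1 := hsmul c (fun _ => (1:ℝ)) hone
    have h2 : (c • fun _ : M => (1:ℝ)) = fun _ : M => c := by funext y; simp
    rw [h2] at h1
    rw [h1]
    simp [hv1 x]
  set T : Fin n → M → ℝ := fun i x => (f i x - a i) * h i (fun j => f j x) with hT
  have hhF : ∀ i, ContMDiff (𝓡 m) 𝓘(ℝ, ℝ) (⊤ : ℕ∞) (fun x => h i (fun j => f j x)) := by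
    intro i
    exact (hhs i).comp_contMDiff hF
  have hsubS : ∀ i, ContMDiff (𝓡 m) 𝓘(ℝ, ℝ) (⊤ : ℕ∞) (fun x => f i x - a i) :=
    fun i => (hf i).sub contMDiff_const
  have hTs : ∀ i, ContMDiff (𝓡 m) 𝓘(ℝ, ℝ) (⊤ : ℕ∞) (T i) :=
    fun i => (hsubS i).mul (hhF i)
  have hv_sum : ∀ s : Finset (Fin n),
      v (fun x => ∑ i ∈ s, T i x) = fun x => ∑ i ∈ s, v (T i) x := by
    intro s
    induction s using Finset.induction_on with
    | empty =>
        have e : (fun x : M => ∑ i ∈ (∅ : Finset (Fin n)), T i x) = fun _ : M => (0:ℝ) := by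
          funext x; simp
        rw [e]
        funext x
        simpa using hvconst 0 x
    | @insert j s hj ih =>
        have hsumS : ContMDiff (𝓡 m) 𝓘(ℝ, ℝ) (⊤ : ℕ∞) (fun x => ∑ i ∈ s, T i x) :=
          contMDiff_finset_sum fun i _ => hTs i
        have e : (fun x : M => ∑ i ∈ insert j s, T i x)
            = (T j + fun x => ∑ i ∈ s, T i x) := by
          funext x; simp [Finset.sum_insert hj]
        rw [e, hadd _ _ (hTs j) hsumS, ih]
        funext x
        simp [Finset.sum_insert hj]
  have hsumS : ContMDiff (𝓡 m) 𝓘(ℝ, ℝ) (⊤ : ℕ∞) (fun x => ∑ i, T i x) :=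
    contMDiff_finset_sum fun i _ => hTs i
  have hrewrite : (fun x : M => g (fun i => f i x))
      = ((fun _ : M => g a) + fun x => ∑ i, T i x) := by
    funext x
    exact hrep (fun i => f i x)
  have hvsub : ∀ i, v (fun x => f i x - a i) = v (f i) := by
    intro i
    have e : (fun x => f i x - a i) = (f i + fun _ : M => -a i) := by
      funext x; simp [sub_eq_add_neg]
    rw [e, hadd _ _ (hf i) (hconstS _)]
    funext x
    simp [hvconst (-a i) x]
  have hvT : ∀ i, v (T i) x₀ = fderiv ℝ g a (Pi.single i 1) * v (f i) x₀ := by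
    intro i
    have e : T i = (fun x => f i x - a i) * (fun x => h i (fun j => f j x)) := rfl
    have h1 := hleibniz _ _ (hsubS i) (hhF i)
    have h2 : v (T i) x₀ = v (fun x => f i x - a i) x₀ * h i (fun j => f j x₀)
        + (f i x₀ - a i) * v (fun x => h i (fun j => f j x)) x₀ := by
      rw [e, h1]; rfl
    have h3 : f i x₀ - a i = 0 := by simp [ha]
    have h4 : (fun j => f j x₀) = a := rfl
    rw [h2, h3, hvsub i, h4, hval i]
    ring
  rw [hrewrite, hadd _ _ (hconstS _) hsumS]
  have h5 := congrFun (hv_sum Finset.univ) x₀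
  simp only [Pi.add_apply, hvconst (g a) x₀, zero_add, h5]
  exact Finset.sum_congr rfl fun i _ => hvT i
end
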